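/- arXiv:1909.09893 — 3 statements merged into one kernel-verified Lean document; each statement's English description precedes it below -/
import Mathlib

section
/- Let T, N be positive reals with k = 3T/N + 1 a positive integer. If μ ≤ N · (1/N)^{k−1} · T^k / k!, then μ ≤ N² · ((e/3)³)^{T/N}. Consequently, for any β ∈ ((e/3)³, 1) and N sufficiently large (depending on β and a polynomial bound T ≤ N^m), μ ≤ β^{T/N} provided T ≥ α'·N·(log N)² for a suitable constant α'. -/
/-!
Since `k! ≥ (k/e)^k` and `k ≥ 3T/N`, the moment bound is at most
`N (1/N)^{k-1} (eN/3)^k = N² (e/3)^k ≤ N² ((e/3)³)^{T/N}`. As `(e/3)³ < β`, the polynomial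
prefactor `N² = exp (2 log N)` is absorbed into `(β / (e/3)³)^{T/N}` as soon as
`T/N ≳ (log N)²`.
-/

open Real
open scoped Nat

lemma pow_div_factorial_le_exp_one_mul_div_pow {x : ℝ} (hx : 0 ≤ x) (k : ℕ) :
    x ^ k / k ! ≤ (exp 1 * x / k) ^ k := by
  rcases k.eq_zero_or_pos with rfl | hk
  · simp
  have hk' : (0 : ℝ) < k := by exact_mod_cast hk
  calc x ^ k / k ! = (x / k) ^ k * ((k : ℝ) ^ k / k !) := by
        rw [div_pow]; field_simp
    _ ≤ (x / k) ^ k * exp k := by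
        gcongr; exact pow_div_factorial_le_exp _ hk'.le k
    _ = (exp 1 * x / k) ^ k := by
        rw [← exp_one_pow, ← mul_pow]; ring_nf

lemma mul_one_div_pow_mul_pow_div_factorial_le {N T : ℝ} (hN : 0 < N) (hT : 0 ≤ T) {k : ℕ}
    (hk : 0 < k) (hTk : 3 * T ≤ N * k) :
    N * (1 / N) ^ (k - 1) * T ^ k / k ! ≤ N ^ 2 * (exp 1 / 3) ^ k := by
  have hk' : (0 : ℝ) < k := by exact_mod_cast hk
  have hratio : exp 1 * T / k ≤ exp 1 * N / 3 := by
    rw [div_le_div_iff₀ hk' three_pos]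
    nlinarith [exp_pos 1]
  have hNk : N * (1 / N) ^ (k - 1) * N ^ k = N ^ 2 := by
    obtain ⟨j, rfl⟩ : ∃ j, k = j + 1 := ⟨k - 1, by omega⟩
    rw [Nat.add_sub_cancel, one_div_pow]
    field_simp
    ring
  calc N * (1 / N) ^ (k - 1) * T ^ k / k ! = N * (1 / N) ^ (k - 1) * (T ^ k / k !) :=
        mul_div_assoc _ _ _
    _ ≤ N * (1 / N) ^ (k - 1) * (exp 1 * T / k) ^ k := by
        gcongr; exact pow_div_factorial_le_exp_one_mul_div_pow hT k
    _ ≤ N * (1 / N) ^ (k - 1) * (exp 1 * N / 3) ^ k := by gcongr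
    _ = N * (1 / N) ^ (k - 1) * N ^ k * (exp 1 / 3) ^ k := by
        rw [mul_div_right_comm, mul_pow]; ring
    _ = N ^ 2 * (exp 1 / 3) ^ k := by rw [hNk]

lemma pow_le_pow_rpow_of_mul_le {c x : ℝ} (hc0 : 0 < c) (hc1 : c ≤ 1) {n k : ℕ}
    (h : n * x ≤ k) : c ^ k ≤ (c ^ n) ^ x := by
  rw [← rpow_natCast_mul hc0.le, ← rpow_natCast]
  exact rpow_le_rpow_of_exponent_ge hc0 hc1 h

lemma mul_one_div_pow_mul_pow_div_factorial_le_rpow {N T : ℝ} (hN : 0 < N) (hT : 0 ≤ T)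
    {k : ℕ} (hk : (k : ℝ) = 3 * T / N + 1) :
    N * (1 / N) ^ (k - 1) * T ^ k / k ! ≤ N ^ 2 * ((exp 1 / 3) ^ 3) ^ (T / N) := by
  have hk_pos : 0 < k := by
    have : (0 : ℝ) < k := by rw [hk]; positivity
    exact_mod_cast this
  have h3T : 3 * T ≤ N * k := by
    rw [hk, mul_add, mul_div_cancel₀ _ hN.ne']; linarith
  have he3 : exp 1 / 3 ≤ 1 := by
    rw [div_le_one three_pos]; linarith [exp_one_lt_d9]
  calc N * (1 / N) ^ (k - 1) * T ^ k / k ! ≤ N ^ 2 * (exp 1 / 3) ^ k :=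
        mul_one_div_pow_mul_pow_div_factorial_le hN hT hk_pos h3T
    _ ≤ N ^ 2 * ((exp 1 / 3) ^ 3) ^ (T / N) := by
        gcongr
        refine pow_le_pow_rpow_of_mul_le (by positivity) he3 ?_
        rw [hk]; push_cast; linarith [mul_div_assoc 3 T N]

lemma sq_mul_rpow_le_rpow {N c β s : ℝ} (hN : 0 < N) (hc : 0 < c) (hβ : 0 < β)
    (h : 2 * log N ≤ s * log (β / c)) : N ^ 2 * c ^ s ≤ β ^ s := by
  have hN2 : N ^ 2 ≤ (β / c) ^ s := by
    rw [rpow_def_of_pos (div_pos hβ hc), ← exp_log (pow_pos hN 2), log_pow]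
    push_cast
    exact exp_le_exp.mpr (by linarith)
  calc N ^ 2 * c ^ s ≤ (β / c) ^ s * c ^ s := by gcongr
    _ = β ^ s := by rw [← mul_rpow (div_pos hβ hc).le hc.le, div_mul_cancel₀ β hc.ne']

theorem stmt4_general (N T μ : ℝ) (hN : 0 < N) (hT : 0 < T) (k : ℕ)
    (hk : (k : ℝ) = 3 * T / N + 1)
    (hμ : μ ≤ N * (1 / N) ^ (k - 1) * T ^ k / (Nat.factorial k)) :
    μ ≤ N ^ 2 * ((Real.exp 1 / 3) ^ 3) ^ (T / N) ∧
      ∀ β : ℝ, (Real.exp 1 / 3) ^ 3 < β → β < 1 → ∀ m : ℕ,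
        ∃ α' : ℝ, 0 < α' ∧ ∃ N₀ : ℝ, ∀ N' : ℝ, N₀ ≤ N' → ∀ T' μ' : ℝ, 0 < T' → 0 ≤ μ' →
          ∀ k' : ℕ, (k' : ℝ) = 3 * T' / N' + 1 →
            T' ≤ N' ^ m → α' * N' * (Real.log N') ^ 2 ≤ T' →
            μ' ≤ N' * (1 / N') ^ (k' - 1) * T' ^ k' / (Nat.factorial k') →
            μ' ≤ β ^ (T' / N') := by
  refine ⟨hμ.trans (mul_one_div_pow_mul_pow_div_factorial_le_rpow hN hT.le hk), ?_⟩
  intro β hβ _ _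
  set c := (exp 1 / 3) ^ 3
  have hc : 0 < c := by positivity
  set L := log (β / c)
  have hL : 0 < L := log_pos ((one_lt_div hc).mpr hβ)
  refine ⟨2 / L, by positivity, exp 1, ?_⟩
  intro N' hN₀ T' μ' hT' _ k' hk' _ hTlog hμ'
  have hN' : 0 < N' := (exp_pos 1).trans_le hN₀
  have hlogN : 1 ≤ log N' := by simpa using log_le_log (exp_pos 1) hN₀
  have hs : 2 / L * log N' ^ 2 ≤ T' / N' := by
    rw [le_div_iff₀ hN']; linarith
  have hexp : 2 * log N' ≤ T' / N' * L := by
    rw [div_mul_eq_mul_div, div_le_iff₀ hL] at hs; nlinarith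
  calc μ' ≤ N' ^ 2 * c ^ (T' / N') :=
        hμ'.trans (mul_one_div_pow_mul_pow_div_factorial_le_rpow hN' hT'.le hk')
    _ ≤ β ^ (T' / N') := sq_mul_rpow_le_rpow hN' hc (hc.trans hβ) hexp

/-- if `k = 3T/N + 1` and `μ ≤ N·(1/N)^{k−1}·T^k/k!`, then
`μ ≤ N²·((e/3)³)^{T/N}`; consequently, for any `β ∈ ((e/3)³, 1)` and any polynomial
bound `T ≤ N^m`, there are `α' > 0` and `N₀` such that for `N ≥ N₀` and
`T ≥ α'·N·(log N)²` one gets `μ ≤ β^{T/N}`. -/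
theorem stmt4 (N T μ : ℝ) (hN : 0 < N) (hT : 0 < T) (k : ℕ)
    (hk : (k : ℝ) = 3 * T / N + 1) (hμ0 : 0 ≤ μ)
    (hμ : μ ≤ N * (1 / N) ^ (k - 1) * T ^ k / (Nat.factorial k)) :
    μ ≤ N ^ 2 * ((Real.exp 1 / 3) ^ 3) ^ (T / N) ∧
      ∀ β : ℝ, (Real.exp 1 / 3) ^ 3 < β → β < 1 → ∀ m : ℕ,
        ∃ α' : ℝ, 0 < α' ∧ ∃ N₀ : ℝ, ∀ N' : ℝ, N₀ ≤ N' → ∀ T' μ' : ℝ, 0 < T' → 0 ≤ μ' →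
          ∀ k' : ℕ, (k' : ℝ) = 3 * T' / N' + 1 →
            T' ≤ N' ^ m → α' * N' * (Real.log N') ^ 2 ≤ T' →
            μ' ≤ N' * (1 / N') ^ (k' - 1) * T' ^ k' / (Nat.factorial k') →
            μ' ≤ β ^ (T' / N') :=
  stmt4_general N T μ hN hT k hk hμ
end

section
/- Let (S_t)_{t≥0} be simple symmetric random walk on ℤ started at 0 and τ_n its hitting time of level n ≥ 1. For all n and all t > 0, P(τ_n ≤ t) ≤ inf_{z∈(0,1)} ((1−√(1−z²))/z)^n · z^{−t}. In particular, choosing z² = 1 − 1/α² with α = 2√(t/(log N)), if n ≥ 10γ√(τ*)·log N and t = 9γ·τ*·log N for some τ* ≥ 1 and γ > 0, then P(τ_n ≤ t) ≤ N^{−5γ/4} for N large enough. -/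
/-!
For `z ∈ (0, 1]` let `φ = (1 - √(1 - z²)) / z`, the root of `z (φ + φ⁻¹) = 2` in `(0, 1]`; it is
the generating function `E[z^{τ_1}]`. Then `z^k φ^{n - S_k}` is a martingale, and stopping it at
`τ_n ∧ T` and averaging over the `2^T` equally likely step patterns gives
`E[z^{τ_n ∧ T} φ^{n - S_{τ_n ∧ T}}] = φ^n`. The stopped weight is at least `z^T` on `{τ_n ≤ T}`,
whence `P(τ_n ≤ T) ≤ φ^n z^{-T}`. It is at most `z^T` on `{τ_n > T}` (the walk stays below `n`),
whence `P(τ_n > T) ≤ 1 - φ^n + z^T`; letting `T → ∞` and then `z → 1` shows that `τ_n < ∞` a.s.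

Taking `z = 1 / cosh θ`, so that `φ = e^{-θ}`, and `cosh θ ≤ e^{θ²/2}` gives
`P(τ_n ≤ t) ≤ exp(-θ n + θ² t / 2)`, and `θ = 1 / (2 √τ*)` gives the bound `N^{-5γ/4}`.
-/

open MeasureTheory ProbabilityTheory Finset Filter Topology
open scoped ENNReal

namespace SimpleRandomWalk

def step (b : Bool) : ℤ := if b then 1 else -1

def visits (m : ℤ) : ℤ → List Bool → Bool
  | x, [] => x == m
  | x, b :: l => x == m || visits m (x + step b) l

/-- `z ^ (τ ∧ T) * φ ^ (m - S (τ ∧ T))` for the walk `S` from `x` with steps `l`, where `T` is the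
length of `l` and `τ` the hitting time of `m`: the exponential martingale stopped at `τ ∧ T`. -/
noncomputable def stoppedWeight (z φ : ℝ) (m : ℤ) : ℤ → List Bool → ℝ
  | x, [] => φ ^ (m - x)
  | x, b :: l => if x = m then 1 else z * stoppedWeight z φ m (x + step b) l

theorem visits_iff {m : ℤ} {l : List Bool} {x : ℤ} :
    visits m x l ↔ ∃ s ≤ l.length, x + ((l.take s).map step).sum = m := by
  induction l generalizing x with
  | nil => simp [visits]
  | cons b l ih =>
    simp only [visits, Bool.or_eq_true, beq_iff_eq, ih, List.length_cons]
    constructor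
    · rintro (h | ⟨s, hs, h⟩)
      · exact ⟨0, by omega, by simp [h]⟩
      · refine ⟨s + 1, by omega, ?_⟩
        simp only [List.take_succ_cons, List.map_cons, List.sum_cons]
        omega
    · rintro ⟨_ | s, hs, h⟩
      · simp only [List.take_zero, List.map_nil, List.sum_nil, add_zero] at h
        exact Or.inl h
      · simp only [List.take_succ_cons, List.map_cons, List.sum_cons] at h
        exact Or.inr ⟨s, by omega, by omega⟩

theorem sum_ofFn_succ {α M : Type*} [Fintype α] [AddCommMonoid M] (F : List α → M) (T : ℕ) :
    ∑ p : Fin (T + 1) → α, F (List.ofFn p) = ∑ a : α, ∑ q : Fin T → α, F (a :: List.ofFn q) := by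
  rw [← (Fin.consEquiv fun _ ↦ α).sum_comp, Fintype.sum_prod_type]
  simp [List.ofFn_succ]

section Weight

variable {z φ : ℝ} {m : ℤ}

theorem sum_stoppedWeight (hφ : φ ≠ 0) (hrel : z * (φ⁻¹ + φ) = 2) (T : ℕ) (x : ℤ) :
    ∑ p : Fin T → Bool, stoppedWeight z φ m x (List.ofFn p) = 2 ^ T * φ ^ (m - x) := by
  induction T generalizing x with
  | zero => simp [stoppedWeight]
  | succ T ih =>
    rw [sum_ofFn_succ, Fintype.sum_bool]
    by_cases hx : x = m
    · simp [stoppedWeight, hx, pow_succ]; ring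
    · simp only [stoppedWeight, if_neg hx, ← mul_sum, ih, step, if_true, Bool.false_eq_true,
        if_false]
      rw [show m - (x + 1) = m - x - 1 by ring, show m - (x + -1) = m - x + 1 by ring,
        zpow_sub_one₀ hφ, zpow_add_one₀ hφ]
      linear_combination 2 ^ T * φ ^ (m - x) * hrel

theorem stoppedWeight_nonneg (hz : 0 ≤ z) (hφ : 0 ≤ φ) (l : List Bool) (x : ℤ) :
    0 ≤ stoppedWeight z φ m x l := by
  induction l generalizing x with
  | nil => exact zpow_nonneg hφ _
  | cons b l ih =>
    simp only [stoppedWeight]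
    split_ifs
    exacts [zero_le_one, mul_nonneg hz (ih _)]

theorem pow_length_le_stoppedWeight (hz0 : 0 ≤ z) (hz1 : z ≤ 1) {l : List Bool} {x : ℤ}
    (h : visits m x l) : z ^ l.length ≤ stoppedWeight z φ m x l := by
  induction l generalizing x with
  | nil => simp_all [visits, stoppedWeight]
  | cons b l ih =>
    simp only [visits, Bool.or_eq_true, beq_iff_eq] at h
    simp only [stoppedWeight, List.length_cons, pow_succ']
    split_ifs with hx
    · exact mul_le_one₀ hz1 (pow_nonneg hz0 _) (pow_le_one₀ hz0 hz1)
    · exact mul_le_mul_of_nonneg_left (ih (h.resolve_left hx)) hz0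

theorem stoppedWeight_le (hz0 : 0 ≤ z) (hz1 : z ≤ 1) (hφ0 : 0 < φ) (hφ1 : φ ≤ 1)
    (l : List Bool) {x : ℤ} (hx : x ≤ m) :
    stoppedWeight z φ m x l ≤ if visits m x l then 1 else z ^ l.length := by
  induction l generalizing x with
  | nil =>
    simp only [stoppedWeight, visits, beq_iff_eq, List.length_nil, pow_zero, ite_self]
    exact zpow_le_one₀ hφ0 hφ1 (by omega)
  | cons b l ih =>
    simp only [stoppedWeight, visits, Bool.or_eq_true, beq_iff_eq, List.length_cons]
    by_cases hxm : x = m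
    · simp [hxm]
    · have hstep : x + step b ≤ m := by cases b <;> simp [step] <;> omega
      simp only [hxm, if_false, false_or]
      calc z * stoppedWeight z φ m (x + step b) l
          ≤ z * (if visits m (x + step b) l then 1 else z ^ l.length) :=
            mul_le_mul_of_nonneg_left (ih hstep) hz0
        _ ≤ _ := by split_ifs <;> simp [pow_succ', hz1]

theorem card_visits_mul_pow_le (hz0 : 0 ≤ z) (hz1 : z ≤ 1) (hφ : 0 < φ)
    (hrel : z * (φ⁻¹ + φ) = 2) (T : ℕ) (x : ℤ) :
    (#{p : Fin T → Bool | visits m x (List.ofFn p)} : ℝ) * z ^ T ≤ 2 ^ T * φ ^ (m - x) := by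
  calc (#{p : Fin T → Bool | visits m x (List.ofFn p)} : ℝ) * z ^ T
      = ∑ p : Fin T → Bool with visits m x (List.ofFn p), z ^ (List.ofFn p).length := by
        simp
    _ ≤ ∑ p : Fin T → Bool with visits m x (List.ofFn p), stoppedWeight z φ m x (List.ofFn p) :=
        sum_le_sum fun p hp ↦ pow_length_le_stoppedWeight hz0 hz1 (mem_filter.1 hp).2
    _ ≤ ∑ p : Fin T → Bool, stoppedWeight z φ m x (List.ofFn p) :=
        sum_le_sum_of_subset_of_nonneg (filter_subset _ _) fun _ _ _ ↦
          stoppedWeight_nonneg hz0 hφ.le _ _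
    _ = 2 ^ T * φ ^ (m - x) := sum_stoppedWeight hφ.ne' hrel T x

theorem card_not_visits_le (hz0 : 0 ≤ z) (hz1 : z ≤ 1) (hφ0 : 0 < φ) (hφ1 : φ ≤ 1)
    (hrel : z * (φ⁻¹ + φ) = 2) (T : ℕ) {x : ℤ} (hx : x ≤ m) :
    (#{p : Fin T → Bool | ¬visits m x (List.ofFn p)} : ℝ) ≤ 2 ^ T * (1 - φ ^ (m - x) + z ^ T) := by
  set a : ℝ := (#{p : Fin T → Bool | visits m x (List.ofFn p)} : ℝ)
  set b : ℝ := (#{p : Fin T → Bool | ¬visits m x (List.ofFn p)} : ℝ)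
  have hab : a + b = 2 ^ T := by
    simp only [a, b]
    exact_mod_cast (card_filter_add_card_filter_not _).trans (by simp)
  have hweight : 2 ^ T * φ ^ (m - x) ≤ a + b * z ^ T := by
    calc 2 ^ T * φ ^ (m - x) = ∑ p : Fin T → Bool, stoppedWeight z φ m x (List.ofFn p) :=
          (sum_stoppedWeight hφ0.ne' hrel T x).symm
      _ ≤ ∑ p : Fin T → Bool, if visits m x (List.ofFn p) then 1 else z ^ T := by
          gcongr with p
          simpa using stoppedWeight_le hz0 hz1 hφ0 hφ1 (List.ofFn p) hx
      _ = a + b * z ^ T := by simp [sum_ite, a, b]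
  have hb : b * z ^ T ≤ 2 ^ T * z ^ T := by
    gcongr
    simp only [b]
    exact_mod_cast (card_filter_le _ _).trans (by simp)
  nlinarith

end Weight

theorem sum_take_ofFn_eq_sum_range {M : Type*} [AddCommMonoid M] (f : ℕ → M) {s T : ℕ}
    (hs : s ≤ T) : ((List.ofFn fun i : Fin T ↦ f i).take s).sum = ∑ i ∈ range s, f i := by
  rw [List.sum_take_ofFn, sum_filter, Fin.sum_univ_eq_sum_range (fun i ↦ if i < s then f i else 0),
    ← sum_filter]
  congr 1
  ext i
  simp only [mem_filter, mem_range]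
  omega

theorem step_decide_eq {a : ℤ} (ha : a = 1 ∨ a = -1) : step (decide (a = 1)) = a := by
  rcases ha with rfl | rfl <;> rfl

theorem natCast_mul_inv_two_pow (c T : ℕ) :
    (c : ℝ≥0∞) * 2⁻¹ ^ T = ENNReal.ofReal (c / 2 ^ T) := by
  rw [ENNReal.ofReal_div_of_pos (by positivity), ENNReal.ofReal_natCast, ENNReal.ofReal_pow
    zero_le_two, ENNReal.ofReal_ofNat, div_eq_mul_inv, ENNReal.inv_pow]

theorem inv_cosh_mul_inv_exp_neg_add_exp_neg (θ : ℝ) :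
    (Real.cosh θ)⁻¹ * ((Real.exp (-θ))⁻¹ + Real.exp (-θ)) = 2 := by
  rw [Real.cosh_eq, Real.exp_neg, inv_inv]
  field_simp

/-- `E[z ^ τ₁]` for the hitting time `τ₁` of `1`: the root of `z * (φ⁻¹ + φ) = 2` in `(0, 1]`. -/
noncomputable def firstPassageGF (z : ℝ) : ℝ := (1 - √(1 - z ^ 2)) / z

theorem sqrt_one_sub_sq_lt_one {z : ℝ} (hz : 0 < z) : √(1 - z ^ 2) < 1 :=
  (Real.sqrt_lt' one_pos).2 (by nlinarith)

theorem firstPassageGF_pos {z : ℝ} (hz : 0 < z) : 0 < firstPassageGF z :=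
  div_pos (by linarith [sqrt_one_sub_sq_lt_one hz]) hz

theorem mul_firstPassageGF_inv_add {z : ℝ} (hz0 : 0 < z) (hz1 : z ≤ 1) :
    z * ((firstPassageGF z)⁻¹ + firstPassageGF z) = 2 := by
  have hsq : √(1 - z ^ 2) ^ 2 = 1 - z ^ 2 := Real.sq_sqrt (by nlinarith)
  have hne : 1 - √(1 - z ^ 2) ≠ 0 := by linarith [sqrt_one_sub_sq_lt_one hz0]
  rw [firstPassageGF]
  field_simp
  linear_combination hsq

variable {Ω : Type*}

structure IsRademacherSeq [MeasurableSpace Ω] (X : ℕ → Ω → ℤ) (μ : Measure Ω) : Prop where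
  measurable : ∀ i, Measurable (X i)
  indep : iIndepFun X μ
  prob_one : ∀ i, μ {ω | X i ω = 1} = 1 / 2
  prob_neg_one : ∀ i, μ {ω | X i ω = -1} = 1 / 2

def stepPattern (X : ℕ → Ω → ℤ) (T : ℕ) (ω : Ω) : Fin T → Bool := fun i ↦ decide (X i ω = 1)

variable {X : ℕ → Ω → ℤ}

theorem visits_stepPattern_iff {ω : Ω} (hω : ∀ i, X i ω = 1 ∨ X i ω = -1) (n : ℤ) (T : ℕ) :
    visits n 0 (List.ofFn (stepPattern X T ω)) ↔ ∃ s ≤ T, ∑ i ∈ range s, X i ω = n := by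
  have hsteps : (List.ofFn (stepPattern X T ω)).map step = List.ofFn fun i : Fin T ↦ X i ω := by
    simp [List.map_ofFn, Function.comp_def, stepPattern, step_decide_eq (hω _)]
  rw [visits_iff, List.length_ofFn]
  refine exists_congr fun s ↦ and_congr_right fun hs ↦ ?_
  rw [List.map_take, hsteps, sum_take_ofFn_eq_sum_range (X · ω) hs, zero_add]

variable [MeasurableSpace Ω] {μ : Measure Ω}

namespace IsRademacherSeq

theorem ae_eq_one_or_neg_one (hX : IsRademacherSeq X μ) [IsProbabilityMeasure μ] :
    ∀ᵐ ω ∂μ, ∀ i, X i ω = 1 ∨ X i ω = -1 := by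
  refine ae_all_iff.2 fun i ↦ ?_
  have hm1 : MeasurableSet {ω | X i ω = 1} := hX.measurable i (measurableSet_singleton 1)
  have hm2 : MeasurableSet {ω | X i ω = -1} := hX.measurable i (measurableSet_singleton (-1))
  have hdisj : Disjoint {ω | X i ω = 1} {ω | X i ω = -1} :=
    Set.disjoint_left.2 fun ω h1 h2 ↦ by simp_all
  rw [ae_iff, show {ω | ¬(X i ω = 1 ∨ X i ω = -1)} = ({ω | X i ω = 1} ∪ {ω | X i ω = -1})ᶜ by
    ext; simp, measure_compl (hm1.union hm2) (measure_ne_top _ _), measure_union hdisj hm2,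
    hX.prob_one, hX.prob_neg_one, ENNReal.add_halves, measure_univ, tsub_self]

theorem measure_steps_eq (hX : IsRademacherSeq X μ) {T : ℕ} (p : Fin T → Bool) :
    μ {ω | ∀ i : Fin T, X i ω = step (p i)} = 2⁻¹ ^ T := by
  have h := (hX.indep.precomp Fin.val_injective).measure_inter_preimage_eq_mul univ
    (sets := fun i ↦ {step (p i)}) fun _ _ ↦ measurableSet_singleton _
  have hfactor : ∀ i : Fin T, μ {ω | X i ω = step (p i)} = 2⁻¹ := fun i ↦ by
    cases p i
    · simpa [step] using hX.prob_neg_one i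
    · simpa [step] using hX.prob_one i
  simpa [hfactor, Set.preimage, Set.iInter_ofPred] using h

theorem measure_le_card_mul (hX : IsRademacherSeq X μ) [IsProbabilityMeasure μ] {T : ℕ}
    (Q : (Fin T → Bool) → Prop) [DecidablePred Q] {E : Set Ω}
    (hE : ∀ᵐ ω ∂μ, ω ∈ E → Q (stepPattern X T ω)) :
    μ E ≤ #{p | Q p} * 2⁻¹ ^ T := by
  have hcover :
      E ≤ᵐ[μ] ⋃ p ∈ ({p | Q p} : Finset _), {ω | ∀ i : Fin T, X i ω = step (p i)} := by
    filter_upwards [hE, hX.ae_eq_one_or_neg_one] with ω hQ hω hωE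
    exact Set.mem_iUnion₂.2 ⟨stepPattern X T ω, by simpa using hQ hωE,
      fun i ↦ (step_decide_eq (hω i)).symm⟩
  calc μ E ≤ ∑ p ∈ ({p | Q p} : Finset _), μ {ω | ∀ i : Fin T, X i ω = step (p i)} :=
        (measure_mono_ae hcover).trans (measure_biUnion_finset_le _ _)
    _ = #{p | Q p} * 2⁻¹ ^ T := by simp [hX.measure_steps_eq]

theorem measure_exists_sum_eq_le (hX : IsRademacherSeq X μ) [IsProbabilityMeasure μ] (n T : ℕ)
    {z φ : ℝ} (hz0 : 0 < z) (hz1 : z ≤ 1) (hφ : 0 < φ) (hrel : z * (φ⁻¹ + φ) = 2) :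
    μ {ω | ∃ s ≤ T, ∑ i ∈ range s, X i ω = n} ≤ ENNReal.ofReal (φ ^ n / z ^ T) := by
  refine (hX.measure_le_card_mul (fun p : Fin T → Bool ↦ visits n 0 (List.ofFn p)) ?_).trans ?_
  · filter_upwards [hX.ae_eq_one_or_neg_one] with ω hω hωE
    exact (visits_stepPattern_iff hω n T).2 hωE
  · rw [natCast_mul_inv_two_pow]
    refine ENNReal.ofReal_le_ofReal ((div_le_div_iff₀ (by positivity) (by positivity)).2 ?_)
    have := card_visits_mul_pow_le (m := n) hz0.le hz1 hφ hrel T 0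
    rw [sub_zero, zpow_natCast] at this
    linarith

theorem measure_forall_sum_ne_le (hX : IsRademacherSeq X μ) [IsProbabilityMeasure μ] (n T : ℕ)
    {z φ : ℝ} (hz0 : 0 ≤ z) (hz1 : z ≤ 1) (hφ0 : 0 < φ) (hφ1 : φ ≤ 1)
    (hrel : z * (φ⁻¹ + φ) = 2) :
    μ {ω | ∀ s ≤ T, ∑ i ∈ range s, X i ω ≠ n} ≤ ENNReal.ofReal (1 - φ ^ n + z ^ T) := by
  refine (hX.measure_le_card_mul (fun p : Fin T → Bool ↦ ¬visits n 0 (List.ofFn p)) ?_).trans ?_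
  · filter_upwards [hX.ae_eq_one_or_neg_one] with ω hω hωE
    rw [visits_stepPattern_iff hω n T]
    rintro ⟨s, hs, h⟩
    exact hωE s hs h
  · rw [natCast_mul_inv_two_pow]
    refine ENNReal.ofReal_le_ofReal ((div_le_iff₀ (by positivity)).2 ?_)
    have := card_not_visits_le (m := n) hz0 hz1 hφ0 hφ1 hrel T (Int.natCast_nonneg n)
    rw [sub_zero, zpow_natCast] at this
    linarith

theorem measure_forall_sum_ne_eq_zero (hX : IsRademacherSeq X μ) [IsProbabilityMeasure μ]
    (n : ℕ) : μ {ω | ∀ s, ∑ i ∈ range s, X i ω ≠ n} = 0 := by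
  set E := {ω | ∀ s, ∑ i ∈ range s, X i ω ≠ n}
  have hsub (T : ℕ) : E ⊆ {ω | ∀ s ≤ T, ∑ i ∈ range s, X i ω ≠ n} := fun ω hω s _ ↦ hω s
  have hbound : ∀ θ > 0, ∀ T : ℕ,
      μ E ≤ ENNReal.ofReal (1 - Real.exp (-θ) ^ n + (Real.cosh θ)⁻¹ ^ T) := fun θ hθ T ↦
    (measure_mono (hsub T)).trans <| hX.measure_forall_sum_ne_le n T
      (inv_pos.2 (Real.cosh_pos θ)).le (inv_le_one_of_one_le₀ (Real.one_le_cosh θ))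
      (Real.exp_pos _) (Real.exp_le_one_iff.2 (by linarith))
      (inv_cosh_mul_inv_exp_neg_add_exp_neg θ)
  have hlimT : ∀ θ > 0, μ E ≤ ENNReal.ofReal (1 - Real.exp (-θ) ^ n) := fun θ hθ ↦ by
    have hz : (Real.cosh θ)⁻¹ < 1 := inv_lt_one_of_one_lt₀ (Real.one_lt_cosh.2 hθ.ne')
    have := tendsto_pow_atTop_nhds_zero_of_lt_one (inv_pos.2 (Real.cosh_pos θ)).le hz
    exact ge_of_tendsto' (ENNReal.tendsto_ofReal (by simpa using this.const_add _)) (hbound θ hθ)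
  have hlimθ : Tendsto (fun θ ↦ ENNReal.ofReal (1 - Real.exp (-θ) ^ n)) (𝓝[>] 0) (𝓝 0) := by
    rw [← ENNReal.ofReal_zero]
    refine ENNReal.tendsto_ofReal (tendsto_nhdsWithin_of_tendsto_nhds ?_)
    have hcont : Continuous fun θ : ℝ ↦ 1 - Real.exp (-θ) ^ n := by fun_prop
    simpa using hcont.tendsto 0
  exact nonpos_iff_eq_zero.1 (ge_of_tendsto hlimθ (eventually_nhdsWithin_of_forall hlimT))

variable {n : ℕ} {τ : Ω → ℕ}

/-- As `sInf ∅ = 0`, `τ` also vanishes where the walk never reaches `n`, a null set by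
`measure_forall_sum_ne_eq_zero`. -/
theorem measure_hittingTime_le_of_rel (hX : IsRademacherSeq X μ) [IsProbabilityMeasure μ]
    (hτ : ∀ ω, τ ω = sInf {t : ℕ | ∑ i ∈ range t, X i ω = n}) {t z φ : ℝ} (ht : 0 ≤ t)
    (hz0 : 0 < z) (hz1 : z ≤ 1) (hφ : 0 < φ) (hrel : z * (φ⁻¹ + φ) = 2) :
    μ {ω | (τ ω : ℝ) ≤ t} ≤ ENNReal.ofReal (φ ^ n * z ^ (-t)) := by
  have hsub : {ω | (τ ω : ℝ) ≤ t} ⊆ {ω | ∃ s ≤ ⌊t⌋₊, ∑ i ∈ range s, X i ω = n} ∪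
      {ω | ∀ s, ∑ i ∈ range s, X i ω ≠ n} := by
    intro ω hω
    by_cases hhit : ∃ s, ∑ i ∈ range s, X i ω = n
    · exact Or.inl ⟨τ ω, Nat.le_floor hω, hτ ω ▸ Nat.sInf_mem hhit⟩
    · exact Or.inr (not_exists.1 hhit)
  have hpow : (z ^ ⌊t⌋₊)⁻¹ ≤ z ^ (-t) := by
    rw [Real.rpow_neg hz0.le, ← Real.rpow_natCast]
    exact inv_anti₀ (by positivity) (Real.rpow_le_rpow_of_exponent_ge hz0 hz1 (Nat.floor_le ht))
  calc μ {ω | (τ ω : ℝ) ≤ t}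
      ≤ μ {ω | ∃ s ≤ ⌊t⌋₊, ∑ i ∈ range s, X i ω = n} + μ {ω | ∀ s, ∑ i ∈ range s, X i ω ≠ n} :=
        (measure_mono hsub).trans (measure_union_le _ _)
    _ = μ {ω | ∃ s ≤ ⌊t⌋₊, ∑ i ∈ range s, X i ω = n} := by
        rw [hX.measure_forall_sum_ne_eq_zero, add_zero]
    _ ≤ ENNReal.ofReal (φ ^ n / z ^ ⌊t⌋₊) := hX.measure_exists_sum_eq_le n _ hz0 hz1 hφ hrel
    _ ≤ ENNReal.ofReal (φ ^ n * z ^ (-t)) := by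
        rw [div_eq_mul_inv]
        gcongr

theorem measure_hittingTime_le (hX : IsRademacherSeq X μ) [IsProbabilityMeasure μ]
    (hτ : ∀ ω, τ ω = sInf {t : ℕ | ∑ i ∈ range t, X i ω = n}) {t z : ℝ} (ht : 0 ≤ t)
    (hz0 : 0 < z) (hz1 : z ≤ 1) :
    μ {ω | (τ ω : ℝ) ≤ t} ≤ ENNReal.ofReal (firstPassageGF z ^ n * z ^ (-t)) :=
  hX.measure_hittingTime_le_of_rel hτ ht hz0 hz1 (firstPassageGF_pos hz0)
    (mul_firstPassageGF_inv_add hz0 hz1)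

theorem measure_hittingTime_le_exp (hX : IsRademacherSeq X μ) [IsProbabilityMeasure μ]
    (hτ : ∀ ω, τ ω = sInf {t : ℕ | ∑ i ∈ range t, X i ω = n}) {t : ℝ} (ht : 0 ≤ t) (θ : ℝ) :
    μ {ω | (τ ω : ℝ) ≤ t} ≤ ENNReal.ofReal (Real.exp (-(θ * n) + θ ^ 2 / 2 * t)) := by
  refine (hX.measure_hittingTime_le_of_rel hτ ht (inv_pos.2 (Real.cosh_pos θ))
    (inv_le_one_of_one_le₀ (Real.one_le_cosh θ)) (Real.exp_pos _)
    (inv_cosh_mul_inv_exp_neg_add_exp_neg θ)).trans (ENNReal.ofReal_le_ofReal ?_)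
  have hexp : Real.exp (-θ) ^ n = Real.exp (-(θ * n)) := by rw [← Real.exp_nat_mul]; ring_nf
  rw [Real.inv_rpow (Real.cosh_pos θ).le, Real.rpow_neg (Real.cosh_pos θ).le, inv_inv, hexp,
    Real.exp_add, Real.exp_mul]
  gcongr
  exact Real.cosh_le_exp_half_sq θ

theorem measure_hittingTime_le_rpow (hX : IsRademacherSeq X μ) [IsProbabilityMeasure μ]
    (hτ : ∀ ω, τ ω = sInf {t : ℕ | ∑ i ∈ range t, X i ω = n}) {γ τstar : ℝ} (hγ : 0 < γ)
    (hτstar : 0 < τstar) {N : ℕ} (hN : 1 ≤ N) (hn : 10 * γ * √τstar * Real.log N ≤ n) :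
    μ {ω | (τ ω : ℝ) ≤ 9 * γ * τstar * Real.log N}
      ≤ ENNReal.ofReal ((N : ℝ) ^ (-(5 * γ / 4))) := by
  have hL : 0 ≤ Real.log N := Real.log_nonneg (by exact_mod_cast hN)
  have hsqrt : 0 < √τstar := Real.sqrt_pos.2 hτstar
  set θ := 1 / (2 * √τstar)
  have hθn : 5 * γ * Real.log N ≤ θ * n := by
    calc 5 * γ * Real.log N = θ * (10 * γ * √τstar * Real.log N) := by
          simp only [θ]; field_simp; ring
      _ ≤ θ * n := by gcongr
  have hθsq : θ ^ 2 / 2 * (9 * γ * τstar * Real.log N) = 9 / 8 * γ * Real.log N := by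
    simp only [θ, div_pow, mul_pow, Real.sq_sqrt hτstar.le]
    field_simp
    ring
  refine (hX.measure_hittingTime_le_exp hτ (by positivity) θ).trans (ENNReal.ofReal_le_ofReal ?_)
  rw [Real.rpow_def_of_pos (by exact_mod_cast hN), Real.exp_le_exp, hθsq]
  nlinarith [mul_nonneg hγ.le hL]

end IsRademacherSeq

end SimpleRandomWalk

/-- Chernoff bound for the first passage time `τ_n` of simple symmetric
random walk on ℤ: `P(τ_n ≤ t) ≤ inf_{z∈(0,1)} ((1−√(1−z²))/z)^n · z^{−t}`; in
particular, for `τ* ≥ 1`, `γ > 0`, `n ≥ 10γ√(τ*)·log N` and `t = 9γ·τ*·log N`,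
`P(τ_n ≤ t) ≤ N^{−5γ/4}` for `N` large enough. -/
theorem stmt7 {Ω : Type*} [MeasurableSpace Ω] (μ : Measure Ω) [IsProbabilityMeasure μ]
    (X : ℕ → Ω → ℤ) (hmeas : ∀ i, Measurable (X i))
    (hindep : iIndepFun X μ)
    (hup : ∀ i, μ {ω | X i ω = 1} = 1/2) (hdown : ∀ i, μ {ω | X i ω = -1} = 1/2)
    (τ : ℕ → Ω → ℕ)
    (hτ : ∀ n ω, τ n ω = sInf {t : ℕ | ∑ i ∈ Finset.range t, X i ω = (n : ℤ)}) :
    (∀ n : ℕ, 1 ≤ n → ∀ t : ℝ, 0 < t → ∀ z : ℝ, 0 < z → z < 1 →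
        μ {ω | (τ n ω : ℝ) ≤ t}
          ≤ ENNReal.ofReal (((1 - Real.sqrt (1 - z ^ 2)) / z) ^ n * z ^ (-t))) ∧
      ∀ γ τstar : ℝ, 0 < γ → 1 ≤ τstar →
        ∃ N₀ : ℕ, ∀ N : ℕ, N₀ ≤ N → ∀ n : ℕ, 1 ≤ n →
          10 * γ * Real.sqrt τstar * Real.log N ≤ (n : ℝ) →
          μ {ω | (τ n ω : ℝ) ≤ 9 * γ * τstar * Real.log N}
            ≤ ENNReal.ofReal ((N : ℝ) ^ (-(5 * γ / 4))) := by
  have hX : SimpleRandomWalk.IsRademacherSeq X μ := ⟨hmeas, hindep, hup, hdown⟩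
  exact ⟨fun n _ t ht z hz0 hz1 ↦ hX.measure_hittingTime_le (hτ n) ht.le hz0 hz1.le,
    fun γ τstar hγ hτstar ↦ ⟨1, fun N hN n _ hn ↦
      hX.measure_hittingTime_le_rpow (hτ n) hγ (by linarith) hN hn⟩⟩
end

section
/- Abelian property of chip-firing/IDLA: fix a locally finite graph with a stack of instructions ξ_x = (ξ_x(k))_{k≥1} at each vertex x, where each ξ_x(k) is a neighbor of x. If α = (x_1,...,x_n) and β = (y_1,...,y_m) are two finite legal toppling sequences both stabilizing a configuration η : V → ℕ (a vertex is unstable if it holds ≥ 2 particles; toppling moves one particle along the next unused instruction), then n = m, β is a permutation of α, and the resulting stable configurations are equal: S_α(η) = S_β(η). -/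
variable {V : Type*} [DecidableEq V]

/-- A chip-firing/IDLA state: the particle configuration together with the count of
topplings already performed at each site (which instruction is next in each stack). -/
structure ChipState (V : Type*) where
  config : V → ℕ   -- number of particles at each site
  count : V → ℕ    -- number of instructions already used at each site

/-- Topple at `x`: move one particle from `x` along the next unused instruction
`ξ x (count x)` (instructions in the stack at `x` are consumed in order). -/
def topple (ξ : V → ℕ → V) (s : ChipState V) (x : V) : ChipState V where
  config := fun y =>
    (s.config y - (if y = x then 1 else 0)) + (if y = ξ x (s.count x) then 1 else 0)
  count := fun y => s.count y + (if y = x then 1 else 0)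

/-- Execute a finite toppling sequence. -/
def run (ξ : V → ℕ → V) : List V → ChipState V → ChipState V
  | [], s => s
  | x :: rest, s => run ξ rest (topple ξ s x)

/-- A sequence is legal if each toppled vertex is unstable (≥ 2 particles) at the
moment it is toppled. -/
def Legal (ξ : V → ℕ → V) : List V → ChipState V → Prop
  | [], _ => True
  | x :: rest, s => 2 ≤ s.config x ∧ Legal ξ rest (topple ξ s x)

/-- A configuration is stable if every site carries at most one particle. -/
def Stable (η : V → ℕ) : Prop := ∀ x, η x ≤ 1

section Aux

variable {ξ : V → ℕ → V}

omit [DecidableEq V] in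
lemma ChipState.ext' {a b : ChipState V} (h1 : a.config = b.config)
    (h2 : a.count = b.count) : a = b := by
  cases a; cases b; simp_all

lemma run_cons (x : V) (l : List V) (s : ChipState V) :
    run ξ (x :: l) s = run ξ l (topple ξ s x) := rfl

lemma config_le_topple {x y : V} (h : y ≠ x) (s : ChipState V) :
    s.config y ≤ (topple ξ s x).config y := by
  simp only [topple, if_neg h]
  split <;> omega

lemma config_le_run {y : V} :
    ∀ (l : List V) (s : ChipState V), y ∉ l → s.config y ≤ (run ξ l s).config y := by
  intro l
  induction l with
  | nil => intro s _; exact le_refl _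
  | cons x rest ih =>
    intro s hy
    simp only [List.mem_cons, not_or] at hy
    exact le_trans (config_le_topple hy.1 s) (ih _ hy.2)

lemma topple_comm {s : ChipState V} {x y : V} (hxy : x ≠ y)
    (hx : 1 ≤ s.config x) (hy : 1 ≤ s.config y) :
    topple ξ (topple ξ s x) y = topple ξ (topple ξ s y) x := by
  apply ChipState.ext'
  · funext z
    simp only [topple, if_neg (Ne.symm hxy), if_neg hxy, add_zero]
    by_cases hzx : z = x
    · subst hzx
      simp only [if_pos rfl, if_neg hxy]
      split <;> split <;> omega
    · by_cases hzy : z = y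
      · subst hzy
        simp only [if_pos rfl, if_neg (Ne.symm hxy)]
        split <;> split <;> omega
      · simp only [if_neg hzx, if_neg hzy]
        split <;> split <;> omega
  · funext z
    simp only [topple, if_neg (Ne.symm hxy), if_neg hxy, add_zero]
    omega

lemma move_front {y : V} :
    ∀ (l₁ : List V), y ∉ l₁ → ∀ (l₂ : List V) (s : ChipState V),
      2 ≤ s.config y → Legal ξ (l₁ ++ y :: l₂) s →
      Legal ξ (y :: (l₁ ++ l₂)) s ∧
        run ξ (l₁ ++ y :: l₂) s = run ξ (y :: (l₁ ++ l₂)) s := by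
  intro l₁
  induction l₁ with
  | nil => intro _ l₂ s _ hL; exact ⟨hL, rfl⟩
  | cons x rest ih =>
    intro hy l₂ s hsy hL
    simp only [List.mem_cons, not_or] at hy
    obtain ⟨hyx, hyrest⟩ := hy
    obtain ⟨hsx, hL'⟩ := hL
    have hsy' : 2 ≤ (topple ξ s x).config y :=
      le_trans hsy (config_le_topple hyx s)
    obtain ⟨ihL, ihR⟩ := ih hyrest l₂ (topple ξ s x) hsy' hL'
    have hcomm : topple ξ (topple ξ s x) y = topple ξ (topple ξ s y) x :=
      topple_comm (fun h => hyx h.symm) (by omega : 1 ≤ s.config x) (by omega)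
    obtain ⟨_, ihL'⟩ := ihL
    have hx' : 2 ≤ (topple ξ s y).config x :=
      le_trans hsx (config_le_topple (fun h => hyx h.symm) s)
    constructor
    · exact ⟨hsy, hx', by rw [← hcomm]; exact ihL'⟩
    · show run ξ (rest ++ y :: l₂) (topple ξ s x) = _
      rw [ihR]
      show run ξ (rest ++ l₂) (topple ξ (topple ξ s x) y)
        = run ξ (rest ++ l₂) (topple ξ (topple ξ s y) x)
      rw [hcomm]

lemma exists_split_first {y : V} :
    ∀ {l : List V}, y ∈ l → ∃ l₁ l₂, l = l₁ ++ y :: l₂ ∧ y ∉ l₁ := by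
  intro l
  induction l with
  | nil => intro h; simp at h
  | cons a t ih =>
    intro h
    by_cases hay : a = y
    · exact ⟨[], t, by simp [hay], by simp⟩
    · have : y ∈ t := by
        rcases List.mem_cons.mp h with h | h
        · exact absurd h.symm hay
        · exact h
      obtain ⟨l₁, l₂, he, hn⟩ := ih this
      exact ⟨a :: l₁, l₂, by simp [he],
        by simp only [List.mem_cons, not_or]; exact ⟨fun h => hay h.symm, hn⟩⟩

lemma mem_of_unstable {y : V} {α : List V} {s : ChipState V}
    (hst : Stable (run ξ α s).config) (hy : 2 ≤ s.config y) : y ∈ α := by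
  by_contra h
  have := config_le_run (ξ := ξ) α s h
  have := hst y
  omega

lemma count_le (x : V) :
    ∀ (β : List V) (α : List V) (s : ChipState V), Legal ξ α s →
      Stable (run ξ α s).config → Legal ξ β s → β.count x ≤ α.count x := by
  intro β
  induction β with
  | nil => intro α s _ _ _; simp
  | cons y β' ih =>
    intro α s hα hαs hβ
    obtain ⟨hy2, hβ'⟩ := hβ
    obtain ⟨α₁, α₂, heq, hnotmem⟩ := exists_split_first (mem_of_unstable hαs hy2)
    subst heq
    obtain ⟨hL, hR⟩ := move_front α₁ hnotmem α₂ s hy2 hα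
    obtain ⟨_, hL'⟩ := hL
    have hst' : Stable (run ξ (α₁ ++ α₂) (topple ξ s y)).config := by
      rw [hR] at hαs; exact hαs
    have := ih (α₁ ++ α₂) (topple ξ s y) hL' hst' hβ'
    simp only [List.count_cons, List.count_append] at *
    omega

lemma run_eq_of_perm :
    ∀ (α β : List V) (s : ChipState V), α.Perm β → Legal ξ α s → Legal ξ β s →
      run ξ α s = run ξ β s := by
  intro α
  induction α with
  | nil => intro β s hp _ _; rw [hp.nil_eq]
  | cons x α' ih =>
    intro β s hp hα hβ
    obtain ⟨hx2, hα'⟩ := hα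
    have hxβ : x ∈ β := hp.mem_iff.mp (by simp)
    obtain ⟨β₁, β₂, heq, hnotmem⟩ := exists_split_first hxβ
    subst heq
    obtain ⟨hL, hR⟩ := move_front β₁ hnotmem β₂ s hx2 hβ
    obtain ⟨_, hL'⟩ := hL
    have hperm : α'.Perm (β₁ ++ β₂) := by
      have h1 : (β₁ ++ x :: β₂).Perm (x :: (β₁ ++ β₂)) := List.perm_middle
      exact ((hp.trans h1).cons_inv)
    rw [hR]
    exact ih (β₁ ++ β₂) (topple ξ s x) hperm hα' hL'

end Aux

/-- Abelian property, Diaconis–Fulton: on a graph with adjacency `Adj`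
and instruction stacks `ξ` pointing to neighbours, if `α` and `β` are two finite legal
toppling sequences both stabilising the configuration `η` (started with fresh stacks),
then they are permutations of one another (in particular of equal length) and produce
the same stable configuration. -/
theorem stmt8 (Adj : V → V → Prop) (ξ : V → ℕ → V) (hξ : ∀ x k, Adj x (ξ x k))
    (η : V → ℕ) (α β : List V)
    (hα : Legal ξ α ⟨η, fun _ => 0⟩) (hβ : Legal ξ β ⟨η, fun _ => 0⟩)
    (hαs : Stable (run ξ α ⟨η, fun _ => 0⟩).config)
    (hβs : Stable (run ξ β ⟨η, fun _ => 0⟩).config) :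
    α.length = β.length ∧ α.Perm β ∧
      (run ξ α ⟨η, fun _ => 0⟩).config = (run ξ β ⟨η, fun _ => 0⟩).config := by
  have hcount : ∀ x, α.count x = β.count x := by
    intro x
    have h1 := count_le (ξ := ξ) x β α _ hα hαs hβ
    have h2 := count_le (ξ := ξ) x α β _ hβ hβs hα
    omega
  have hperm : α.Perm β := List.perm_iff_count.mpr hcount
  exact ⟨hperm.length_eq, hperm, by rw [run_eq_of_perm α β _ hperm hα hβ]⟩
end
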